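/- arXiv:1512.08141 — 2 statements merged into one kernel-verified Lean document; each statement's English description precedes it below -/
import Mathlib

section
/- Let n ≥ 2 and let i be an integer with 1 ≤ i ≤ ⌊n/2⌋, and let G = C_n(1, ..., î, ..., ⌊n/2⌋) be the circulant graph whose generating set is {1, 2, ..., ⌊n/2⌋} \ {i}. Then G satisfies Serre's condition S_2 if and only if gcd(i, n) = 1. -/
/-- The circulant graph `C_n(S)` on vertex set `ZMod n`: `i` and `j` are adjacent
iff `i ≠ j` and `|i-j| ∈ S` or `n - |i-j| ∈ S` (encoded via `ZMod` subtraction). -/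
def circulantGraph (n : ℕ) (S : Set ℕ) : SimpleGraph (ZMod n) where
  Adj i j := i ≠ j ∧ ((i - j).val ∈ S ∨ (j - i).val ∈ S)
  symm := ⟨fun i j h => ⟨h.1.symm, h.2.symm⟩⟩
  loopless := ⟨fun i h => h.1 rfl⟩

/-- An (abstract) simplicial complex on vertex type `V`, as a downward closed
family of finite subsets of `V`. -/
def IsComplex {V : Type*} (Δ : Set (Finset V)) : Prop :=
  ∀ F ∈ Δ, ∀ G ⊆ F, G ∈ Δ

/-- The link of a face `F` in the complex `Δ`. -/
def linkC {V : Type*} [DecidableEq V] (Δ : Set (Finset V)) (F : Finset V) : Set (Finset V) :=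
  {G | Disjoint G F ∧ G ∪ F ∈ Δ}

/-- A complex is connected if any two of its vertices can be joined by a path
of 1-dimensional faces. -/
def ComplexConnected {V : Type*} [DecidableEq V] (Δ : Set (Finset V)) : Prop :=
  ∀ u, ({u} : Finset V) ∈ Δ → ∀ w, ({w} : Finset V) ∈ Δ →
    Relation.ReflTransGen (fun a b => a ≠ b ∧ ({a, b} : Finset V) ∈ Δ) u w

/-- Serre's condition `S₂` for a simplicial complex: the link of every face of the
complex whose link has dimension at least `1` is connected. -/
def IsS2 {V : Type*} [DecidableEq V] (Δ : Set (Finset V)) : Prop :=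
  ∀ F ∈ Δ, (∃ G ∈ linkC Δ F, 2 ≤ G.card) → ComplexConnected (linkC Δ F)

/-- The independence complex of a graph: faces are the (finite) independent sets. -/
def IndComplex {V : Type*} (G : SimpleGraph V) : Set (Finset V) :=
  {F | ∀ u ∈ F, ∀ v ∈ F, ¬ G.Adj u v}

/-- A graph is `S₂` if its independence complex is `S₂`. -/
def GraphS2 {V : Type*} [DecidableEq V] (G : SimpleGraph V) : Prop :=
  IsS2 (IndComplex G)

/-- The facets (maximal faces) of a complex. -/
def facetsOf {V : Type*} (Δ : Set (Finset V)) : Set (Finset V) :=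
  {F | F ∈ Δ ∧ ∀ G ∈ Δ, F ⊆ G → F = G}

/-- A graph is well-covered if all its maximal independent sets have the same cardinality. -/
def WellCovered {V : Type*} (G : SimpleGraph V) : Prop :=
  ∀ A ∈ facetsOf (IndComplex G), ∀ B ∈ facetsOf (IndComplex G), A.card = B.card

/-- A complex is pure if all its facets have the same cardinality. -/
def IsPure {V : Type*} (Δ : Set (Finset V)) : Prop :=
  ∀ F ∈ facetsOf Δ, ∀ G ∈ facetsOf Δ, F.card = G.card

/-- `L` is a shelling order of `Δ`: a linear order `F₁, …, Fₛ` of all the facets of `Δ`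
such that for all `i < j` there are `v ∈ Fⱼ \ Fᵢ` and `l < j` with `Fⱼ \ F_l = {v}`. -/
def IsShellingOrder {V : Type*} [DecidableEq V] (Δ : Set (Finset V)) (L : List (Finset V)) : Prop :=
  L.Nodup ∧ (∀ F, F ∈ facetsOf Δ ↔ F ∈ L) ∧
    ∀ i j : Fin L.length, i < j →
      ∃ v ∈ L.get j \ L.get i, ∃ l : Fin L.length, l < j ∧ L.get j \ L.get l = {v}

/-- A complex is shellable if its facets admit a shelling order. -/
def IsShellable {V : Type*} [DecidableEq V] (Δ : Set (Finset V)) : Prop :=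
  ∃ L : List (Finset V), IsShellingOrder Δ L

/-- A pure complex is strongly connected if any two facets are joined by a sequence of
facets in which consecutive facets intersect in one element fewer than their cardinality. -/
def StronglyConnectedComplex {V : Type*} [DecidableEq V] (Δ : Set (Finset V)) : Prop :=
  ∀ F ∈ facetsOf Δ, ∀ F' ∈ facetsOf Δ,
    Relation.ReflTransGen
      (fun A B => A ∈ facetsOf Δ ∧ B ∈ facetsOf Δ ∧ (A ∩ B).card = A.card - 1) F F'

/-- The join of two simplicial complexes (on disjoint vertex sets). -/
def joinC {V : Type*} [DecidableEq V] (Δ₁ Δ₂ : Set (Finset V)) : Set (Finset V) :=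
  {F | ∃ F₁ ∈ Δ₁, ∃ F₂ ∈ Δ₂, F = F₁ ∪ F₂}

/-- The generating set of the one-paired circulant graph `C(n; a, b)`. -/
def onePairedSet (n a b : ℕ) : Set ℕ :=
  {d | 1 ≤ d ∧ d ≤ n / 2 ∧ a ∣ d ∧ ¬ (a * b ∣ d)}

/-!
Two vertices of `C_n({1,…,⌊n/2⌋} \ {i})` are non-adjacent exactly when they differ by `±i`, so
`Ind(G)` is the clique complex of the circulant graph `C_n(i)`. Its 1-skeleton is connected iff
`i` generates `ZMod n`, i.e. iff `gcd(i, n) = 1`, and this is `S₂` at the empty face. Every face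
containing `a` lies in `{a, a + i, a - i}`, so a nonempty face whose link has an edge spans this
whole triangle, and its link is then a simplex, hence connected.
-/

section IndComplex

variable {V : Type*}

theorem isComplex_indComplex (G : SimpleGraph V) : IsComplex (IndComplex G) :=
  fun _ hF _ hsub u hu v hv => hF u (hsub hu) v (hsub hv)

theorem mem_indComplex_compl_iff {G : SimpleGraph V} {F : Finset V} :
    F ∈ IndComplex Gᶜ ↔ G.IsClique (F : Set V) := by
  simp only [IndComplex, Set.mem_ofPred_eq, SimpleGraph.compl_adj, not_and, not_not,
    SimpleGraph.IsClique, Set.Pairwise, Finset.mem_coe]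

variable [DecidableEq V]

theorem linkC_empty (Δ : Set (Finset V)) : linkC Δ ∅ = Δ := by
  ext G
  simp [linkC]

theorem complexConnected_indComplex_iff (G : SimpleGraph V) :
    ComplexConnected (IndComplex G) ↔ Gᶜ.Preconnected := by
  have hvertex (a : V) : ({a} : Finset V) ∈ IndComplex G := by
    simp [IndComplex]
  have hedge (a b : V) : (a ≠ b ∧ ({a, b} : Finset V) ∈ IndComplex G) ↔ Gᶜ.Adj a b := by
    simp only [IndComplex, Set.mem_ofPred_eq, Finset.mem_insert, Finset.mem_singleton,
      SimpleGraph.compl_adj, forall_eq_or_imp, forall_eq, SimpleGraph.irrefl, not_false_eq_true,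
      true_and, and_true]
    exact ⟨fun h => ⟨h.1, h.2.1⟩, fun h => ⟨h.1, h.2, fun h' => h.2 h'.symm⟩⟩
  simp only [ComplexConnected, SimpleGraph.Preconnected, SimpleGraph.reachable_iff_reflTransGen,
    hedge, hvertex, true_imp_iff]

theorem complexConnected_linkC_of_subset {Δ : Set (Finset V)} (hΔ : IsComplex Δ)
    {F S : Finset V} (hS : S ∈ Δ) (hsub : ∀ G ∈ linkC Δ F, G ∪ F ⊆ S) :
    ComplexConnected (linkC Δ F) := by
  intro u hu w hw
  rcases eq_or_ne u w with rfl | huw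
  · rfl
  have hu' := hsub _ hu
  have hw' := hsub _ hw
  refine .single ⟨huw, ?_, hΔ S hS _ ?_⟩
  · rw [Finset.insert_eq, Finset.disjoint_union_left]
    exact ⟨hu.1, hw.1⟩
  · intro x hx
    simp only [Finset.mem_union, Finset.mem_insert, Finset.mem_singleton] at hx
    rcases hx with (rfl | rfl) | hx
    · exact hu' (by simp)
    · exact hw' (by simp)
    · exact hu' (Finset.mem_union_right _ hx)

end IndComplex

namespace SimpleGraph

-- Here `circulantGraph` is Mathlib's `SimpleGraph.circulantGraph` on an additive group.
variable {A : Type*} [AddGroup A] {z : A}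

theorem IsClique.subset_circulantGraph_singleton [DecidableEq A] {F : Finset A}
    (hF : (circulantGraph {z}).IsClique (F : Set A)) {a : A} (ha : a ∈ F) :
    F ⊆ {a, z + a, -z + a} := by
  intro b hb
  rcases eq_or_ne b a with rfl | hba
  · simp
  have := hF hb ha hba
  simp only [circulantGraph_adj, Set.mem_singleton_iff] at this
  rcases this.2 with h | h
  · simp [← h]
  · simp [← h]

theorem reachable_circulantGraph_singleton_iff {u v : A} :
    (circulantGraph {z}).Reachable u v ↔ u - v ∈ AddSubgroup.zmultiples z := by
  constructor
  · intro h
    rw [reachable_iff_reflTransGen] at h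
    induction h with
    | refl => simp
    | @tail b c _ hbc ih =>
      rw [← sub_add_sub_cancel u b c]
      refine add_mem ih ?_
      simp only [circulantGraph_adj, Set.mem_singleton_iff] at hbc
      rcases hbc.2 with h | h
      · exact h ▸ AddSubgroup.mem_zmultiples z
      · rw [← neg_sub, h]
        exact neg_mem (AddSubgroup.mem_zmultiples z)
  · intro h
    have hshift : ∀ x ∈ AddSubgroup.zmultiples z, ∀ w,
        (circulantGraph {z}).Reachable (x + w) w := by
      rw [AddSubgroup.zmultiples_eq_closure]
      intro x hx
      induction hx using AddSubgroup.closure_induction with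
      | mem x hx =>
        intro w
        rcases eq_or_ne z 0 with rfl | hz
        · simp_all
        · exact Adj.reachable (by simp_all)
      | zero => simp
      | add x y _ _ hx hy => exact fun w => (add_assoc x y w ▸ hx (y + w)).trans (hy w)
      | neg x _ hx => exact fun w => (add_neg_cancel_left x w ▸ hx (-x + w)).symm
    simpa using hshift _ h v

theorem preconnected_circulantGraph_singleton_iff :
    (circulantGraph {z}).Preconnected ↔ AddSubgroup.zmultiples z = ⊤ := by
  simp only [Preconnected, reachable_circulantGraph_singleton_iff, AddSubgroup.eq_top_iff']
  exact ⟨fun h x => by simpa using h x 0, fun h u v => h _⟩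

theorem graphS2_compl_circulantGraph_singleton_iff [DecidableEq A] (hz : z ≠ 0) :
    GraphS2 (circulantGraph {z})ᶜ ↔ (circulantGraph {z}).Preconnected := by
  set Δ := IndComplex (circulantGraph {z})ᶜ
  have hconn : ComplexConnected Δ ↔ (circulantGraph {z}).Preconnected := by
    rw [complexConnected_indComplex_iff, compl_compl]
  constructor
  · intro hS2
    have hedge : ({0, z} : Finset A) ∈ Δ := by
      rw [mem_indComplex_compl_iff, Finset.coe_pair, isClique_pair]
      simp
    have hempty : (∅ : Finset A) ∈ Δ := isComplex_indComplex _ _ hedge _ (Finset.empty_subset _)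
    have := hS2 ∅ hempty ⟨{0, z}, by rwa [linkC_empty], by rw [Finset.card_pair hz.symm]⟩
    rwa [linkC_empty, hconn] at this
  · rintro hpre F - ⟨G, hG, hGcard⟩
    obtain rfl | ⟨a, ha⟩ := F.eq_empty_or_nonempty
    · rwa [linkC_empty, hconn]
    have hstar : ∀ H ∈ linkC Δ F, H ∪ F ⊆ {a, z + a, -z + a} := fun H hH =>
      (mem_indComplex_compl_iff.1 hH.2).subset_circulantGraph_singleton
        (Finset.mem_union_right _ ha)
    have htriangle : G ∪ F = {a, z + a, -z + a} := by
      refine Finset.eq_of_subset_of_card_le (hstar G hG) ?_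
      rw [Finset.card_union_of_disjoint hG.1]
      have := Finset.card_pos.2 ⟨a, ha⟩
      have := Finset.card_le_three (a := a) (b := z + a) (c := -z + a)
      omega
    exact complexConnected_linkC_of_subset (isComplex_indComplex _) (htriangle ▸ hG.2)
      (htriangle ▸ hstar)

end SimpleGraph

theorem ZMod.zmultiples_natCast_eq_top_iff {n : ℕ} (m : ℕ) :
    AddSubgroup.zmultiples (m : ZMod n) = ⊤ ↔ m.Coprime n := by
  rw [← ZMod.isUnit_iff_coprime]
  constructor
  · intro h
    obtain ⟨k, hk⟩ := AddSubgroup.mem_zmultiples_iff.1 (h ▸ AddSubgroup.mem_top (1 : ZMod n))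
    exact .of_mul_eq_one (k : ZMod n) (by rwa [mul_comm, ← zsmul_eq_mul])
  · rintro ⟨u, hu⟩
    refine eq_top_iff.2 fun x _ => AddSubgroup.mem_zmultiples_iff.2
      ⟨(ZMod.cast (x * ((u⁻¹ : (ZMod n)ˣ) : ZMod n)) : ℤ), ?_⟩
    rw [zsmul_eq_mul, ZMod.intCast_zmod_cast, ← hu, mul_assoc, Units.inv_mul, mul_one]

theorem circulantGraph_omit_eq_compl {n i : ℕ} (hi1 : 1 ≤ i) (hi2 : i ≤ n / 2) :
    circulantGraph n (Set.Icc 1 (n / 2) \ {i}) =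
      (SimpleGraph.circulantGraph {(i : ZMod n)})ᶜ := by
  have : NeZero n := ⟨by omega⟩
  have hcast (d : ZMod n) : d = i ↔ d.val = i := by
    rw [← (ZMod.val_injective n).eq_iff, ZMod.val_natCast_of_lt (by omega)]
  ext u v
  simp only [circulantGraph, SimpleGraph.compl_adj, SimpleGraph.circulantGraph_adj,
    Set.mem_sdiff, Set.mem_Icc, Set.mem_singleton_iff, hcast]
  refine and_congr_right fun huv => ?_
  have : NeZero (u - v) := ⟨sub_ne_zero.2 huv⟩
  have hneg : (v - u).val = n - (u - v).val := by rw [← neg_sub, ZMod.val_neg_of_ne_zero]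
  have hpos : (u - v).val ≠ 0 := (ZMod.val_ne_zero _).2 (sub_ne_zero.2 huv)
  have hlt := ZMod.val_lt (u - v)
  rw [hneg]
  simp only [huv, not_false_eq_true, true_and]
  omega

theorem circulant_omit_S2_iff_general (n i : ℕ) (hi1 : 1 ≤ i) (hi2 : i ≤ n / 2) :
    GraphS2 (circulantGraph n (Set.Icc 1 (n / 2) \ {i})) ↔ Nat.gcd i n = 1 := by
  have hi0 : (i : ZMod n) ≠ 0 := by
    rw [Ne, ZMod.natCast_eq_zero_iff]
    exact fun h => absurd (Nat.le_of_dvd (by omega) h) (by omega)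
  rw [circulantGraph_omit_eq_compl hi1 hi2,
    SimpleGraph.graphS2_compl_circulantGraph_singleton_iff hi0,
    SimpleGraph.preconnected_circulantGraph_singleton_iff, ZMod.zmultiples_natCast_eq_top_iff]

/-- For `n ≥ 2` and `1 ≤ i ≤ ⌊n/2⌋`, the circulant graph `C_n(1,…,î,…,⌊n/2⌋)`
(generating set `{1,…,⌊n/2⌋} \ {i}`) is `S₂` iff `gcd(i, n) = 1`. -/
theorem circulant_omit_S2_iff (n i : ℕ) (hn : 2 ≤ n) (hi1 : 1 ≤ i) (hi2 : i ≤ n / 2) :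
    GraphS2 (circulantGraph n (Set.Icc 1 (n / 2) \ {i})) ↔ Nat.gcd i n = 1 :=
  circulant_omit_S2_iff_general n i hi1 hi2
end

section
/- Let Δ_1 and Δ_2 be simplicial complexes with disjoint vertex sets. Then the join Δ = Δ_1 ∗ Δ_2 satisfies Serre's condition S_2 if and only if both Δ_1 and Δ_2 satisfy Serre's condition S_2. -/
/-!
The link of a face `F₁ ∪ F₂` of `Δ₁ ∗ Δ₂` is `lk F₁ ∗ lk F₂`. Taking `F₂` a facet of `Δ₂` makes
the second factor `{∅}`, so every link of `Δ₁` is a link of the join. Conversely, if both factors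
have a vertex their join contains every edge between them and is connected; otherwise one factor
is `{∅}` and the link of the join is a link of `Δ₁` or of `Δ₂`.
-/

lemma exists_mem_facetsOf {V : Type*} [Finite V] {Δ : Set (Finset V)} (hΔ : Δ.Nonempty) :
    ∃ F, F ∈ facetsOf Δ := by
  obtain ⟨F, hF⟩ := (Set.toFinite Δ).exists_maximal hΔ
  exact ⟨F, hF.prop, fun G hG hFG => (hF.eq_of_ge hG hFG).symm⟩

section

variable {V : Type*} [DecidableEq V] {Δ Δ₁ Δ₂ : Set (Finset V)}

lemma joinC_comm (Δ₁ Δ₂ : Set (Finset V)) : joinC Δ₁ Δ₂ = joinC Δ₂ Δ₁ := by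
  ext F
  constructor <;>
    rintro ⟨F₁, hF₁, F₂, hF₂, rfl⟩ <;> exact ⟨F₂, hF₂, F₁, hF₁, Finset.union_comm _ _⟩

lemma joinC_singleton_empty (Δ : Set (Finset V)) : joinC Δ {∅} = Δ := by
  ext F
  constructor
  · rintro ⟨F₁, hF₁, _, rfl, rfl⟩
    simpa using hF₁
  · exact fun hF => ⟨F, hF, ∅, rfl, by simp⟩

lemma IsComplex.eq_singleton_empty (hΔ : IsComplex Δ) (he : ∅ ∈ Δ)
    (hv : ∀ v, ({v} : Finset V) ∉ Δ) : Δ = {∅} := by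
  ext G
  constructor
  · intro hG
    by_contra hne
    obtain ⟨v, hvG⟩ := Finset.nonempty_iff_ne_empty.mpr hne
    exact hv v (hΔ G hG _ (Finset.singleton_subset_iff.mpr hvG))
  · rintro rfl
    exact he

lemma IsComplex.linkC (hΔ : IsComplex Δ) (F : Finset V) : IsComplex (linkC Δ F) :=
  fun _ hG _ hH => ⟨hG.1.mono_left hH, hΔ _ hG.2 _ (Finset.union_subset_union hH le_rfl)⟩

lemma linkC_subset (hΔ : IsComplex Δ) (F : Finset V) : linkC Δ F ⊆ Δ :=
  fun _ hG => hΔ _ hG.2 _ Finset.subset_union_left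

lemma empty_mem_linkC {F : Finset V} (hF : F ∈ Δ) : ∅ ∈ linkC Δ F :=
  ⟨Finset.disjoint_empty_left F, by simpa using hF⟩

lemma linkC_eq_singleton_empty_of_mem_facetsOf {F : Finset V} (hF : F ∈ facetsOf Δ) :
    linkC Δ F = {∅} := by
  ext G
  constructor
  · rintro ⟨hGF, hGΔ⟩
    have hGsub : G ⊆ F := (hF.2 _ hGΔ Finset.subset_union_right).symm ▸ Finset.subset_union_left
    exact Finset.disjoint_self_iff_empty G |>.mp (hGF.mono_right hGsub)
  · rintro rfl
    exact empty_mem_linkC hF.1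

lemma linkC_joinC (h₁ : IsComplex Δ₁) (h₂ : IsComplex Δ₂)
    (hdisj : ∀ F₁ ∈ Δ₁, ∀ F₂ ∈ Δ₂, Disjoint F₁ F₂)
    {F₁ F₂ : Finset V} (hF₁ : F₁ ∈ Δ₁) (hF₂ : F₂ ∈ Δ₂) :
    linkC (joinC Δ₁ Δ₂) (F₁ ∪ F₂) = joinC (linkC Δ₁ F₁) (linkC Δ₂ F₂) := by
  ext G
  constructor
  · rintro ⟨hGF, H₁, hH₁, H₂, hH₂, hGH⟩
    have hF : F₁ ∪ F₂ ⊆ H₁ ∪ H₂ := hGH ▸ Finset.subset_union_right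
    have hF₁H₁ : F₁ ⊆ H₁ :=
      (hdisj _ hF₁ _ hH₂).left_le_of_le_sup_right (Finset.union_subset_left hF)
    have hF₂H₂ : F₂ ⊆ H₂ :=
      (hdisj _ hH₁ _ hF₂).symm.left_le_of_le_sup_left (Finset.union_subset_right hF)
    refine ⟨G ∩ H₁, ⟨?_, ?_⟩, G ∩ H₂, ⟨?_, ?_⟩, ?_⟩
    · exact (hGF.mono_right Finset.subset_union_left).mono_left Finset.inter_subset_left
    · exact h₁ _ hH₁ _ (Finset.union_subset Finset.inter_subset_right hF₁H₁)
    · exact (hGF.mono_right Finset.subset_union_right).mono_left Finset.inter_subset_left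
    · exact h₂ _ hH₂ _ (Finset.union_subset Finset.inter_subset_right hF₂H₂)
    · rw [← Finset.inter_union_distrib_left, Finset.inter_eq_left.mpr]
      exact hGH ▸ Finset.subset_union_left
  · rintro ⟨G₁, ⟨hG₁F₁, hG₁⟩, G₂, ⟨hG₂F₂, hG₂⟩, rfl⟩
    have hG₁F₂ := hdisj _ (h₁ _ hG₁ _ Finset.subset_union_left) _ hF₂
    have hF₁G₂ := hdisj _ hF₁ _ (h₂ _ hG₂ _ Finset.subset_union_left)
    refine ⟨?_, G₁ ∪ F₁, hG₁, G₂ ∪ F₂, hG₂, ?_⟩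
    · simp only [Finset.disjoint_union_left, Finset.disjoint_union_right]
      exact ⟨⟨hG₁F₁, hF₁G₂.symm⟩, hG₁F₂, hG₂F₂⟩
    · ext a
      simp only [Finset.mem_union]
      tauto

lemma singleton_mem_or_of_singleton_mem_joinC {u : V} (hu : {u} ∈ joinC Δ₁ Δ₂) :
    {u} ∈ Δ₁ ∨ {u} ∈ Δ₂ := by
  obtain ⟨G₁, hG₁, G₂, hG₂, hu⟩ := hu
  rcases Finset.subset_singleton_iff.mp (hu ▸ Finset.subset_union_left : G₁ ⊆ {u}) with rfl | rfl
  · exact .inr (by simpa [hu] using hG₂)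
  · exact .inl hG₁

lemma complexConnected_joinC (hdisj : ∀ F₁ ∈ Δ₁, ∀ F₂ ∈ Δ₂, Disjoint F₁ F₂)
    {a b : V} (ha : {a} ∈ Δ₁) (hb : {b} ∈ Δ₂) : ComplexConnected (joinC Δ₁ Δ₂) := by
  have edge : ∀ x y, {x} ∈ Δ₁ → {y} ∈ Δ₂ → x ≠ y ∧ {x, y} ∈ joinC Δ₁ Δ₂ := fun x y hx hy =>
    ⟨fun hxy => by simpa [hxy] using hdisj _ hx _ hy, {x}, hx, {y}, hy, rfl⟩
  have path₁₂ : ∀ x y, {x} ∈ Δ₁ → {y} ∈ Δ₂ →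
      Relation.ReflTransGen (fun c d => c ≠ d ∧ {c, d} ∈ joinC Δ₁ Δ₂) x y :=
    fun x y hx hy => .single (edge x y hx hy)
  have path₂₁ : ∀ x y, {x} ∈ Δ₂ → {y} ∈ Δ₁ →
      Relation.ReflTransGen (fun c d => c ≠ d ∧ {c, d} ∈ joinC Δ₁ Δ₂) x y := fun x y hx hy =>
    .single ⟨(edge y x hy hx).1.symm, Finset.pair_comm x y ▸ (edge y x hy hx).2⟩
  intro u hu w hw
  rcases singleton_mem_or_of_singleton_mem_joinC hu with hu | hu <;>
    rcases singleton_mem_or_of_singleton_mem_joinC hw with hw | hw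
  · exact (path₁₂ u b hu hb).trans (path₂₁ b w hb hw)
  · exact path₁₂ u w hu hw
  · exact path₂₁ u w hu hw
  · exact (path₂₁ u a hu ha).trans (path₁₂ a w ha hw)

lemma IsS2.of_joinC_left [Finite V] (h₁ : IsComplex Δ₁) (h₂ : IsComplex Δ₂) (he₂ : ∅ ∈ Δ₂)
    (hdisj : ∀ F₁ ∈ Δ₁, ∀ F₂ ∈ Δ₂, Disjoint F₁ F₂) (hS : IsS2 (joinC Δ₁ Δ₂)) : IsS2 Δ₁ := by
  intro F₁ hF₁
  obtain ⟨F₂, hF₂⟩ := exists_mem_facetsOf ⟨∅, he₂⟩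
  have hlink : linkC (joinC Δ₁ Δ₂) (F₁ ∪ F₂) = linkC Δ₁ F₁ := by
    rw [linkC_joinC h₁ h₂ hdisj hF₁ hF₂.1, linkC_eq_singleton_empty_of_mem_facetsOf hF₂,
      joinC_singleton_empty]
  simpa only [hlink] using hS _ ⟨F₁, hF₁, F₂, hF₂.1, rfl⟩

lemma isS2_joinC (h₁ : IsComplex Δ₁) (h₂ : IsComplex Δ₂)
    (hdisj : ∀ F₁ ∈ Δ₁, ∀ F₂ ∈ Δ₂, Disjoint F₁ F₂) (hS₁ : IsS2 Δ₁) (hS₂ : IsS2 Δ₂) :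
    IsS2 (joinC Δ₁ Δ₂) := by
  rintro _ ⟨F₁, hF₁, F₂, hF₂, rfl⟩
  rw [linkC_joinC h₁ h₂ hdisj hF₁ hF₂]
  by_cases hv₂ : ∃ b, {b} ∈ linkC Δ₂ F₂
  · by_cases hv₁ : ∃ a, {a} ∈ linkC Δ₁ F₁
    · obtain ⟨a, ha⟩ := hv₁
      obtain ⟨b, hb⟩ := hv₂
      refine fun _ => complexConnected_joinC (fun G₁ hG₁ G₂ hG₂ => ?_) ha hb
      exact hdisj _ (linkC_subset h₁ _ hG₁) _ (linkC_subset h₂ _ hG₂)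
    · rw [joinC_comm, (h₁.linkC F₁).eq_singleton_empty (empty_mem_linkC hF₁) (not_exists.mp hv₁),
        joinC_singleton_empty]
      exact hS₂ F₂ hF₂
  · rw [(h₂.linkC F₂).eq_singleton_empty (empty_mem_linkC hF₂) (not_exists.mp hv₂),
      joinC_singleton_empty]
    exact hS₁ F₁ hF₁

end

/-- For simplicial complexes `Δ₁`, `Δ₂` with disjoint vertex sets, the join `Δ₁ ∗ Δ₂`
is `S₂` iff both `Δ₁` and `Δ₂` are `S₂`. -/
theorem join_S2_iff {V : Type*} [DecidableEq V] [Fintype V]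
    (Δ₁ Δ₂ : Set (Finset V)) (h₁ : IsComplex Δ₁) (h₂ : IsComplex Δ₂)
    (he₁ : (∅ : Finset V) ∈ Δ₁) (he₂ : (∅ : Finset V) ∈ Δ₂)
    (hdisj : ∀ F₁ ∈ Δ₁, ∀ F₂ ∈ Δ₂, Disjoint F₁ F₂) :
    IsS2 (joinC Δ₁ Δ₂) ↔ IsS2 Δ₁ ∧ IsS2 Δ₂ := by
  refine ⟨fun hS => ⟨hS.of_joinC_left h₁ h₂ he₂ hdisj, ?_⟩,
    fun ⟨hS₁, hS₂⟩ => isS2_joinC h₁ h₂ hdisj hS₁ hS₂⟩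
  rw [joinC_comm] at hS
  exact hS.of_joinC_left h₂ h₁ he₁ fun F₂ hF₂ F₁ hF₁ => (hdisj F₁ hF₁ F₂ hF₂).symm
end
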